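/- One CNOT does not suffice up to the 2+1+1 measurement with subspaces span{|00⟩,|11⟩}, span{|01⟩}, span{|10⟩}: there exists a two-qubit unitary u ∈ Matrix.unitaryGroup (Fin 2 × Fin 2) ℂ such that for all a, b, c, d ∈ Matrix.unitaryGroup (Fin 2) ℂ and every unitary V ∈ Matrix.unitaryGroup (Fin 2 × Fin 2) ℂ satisfying: V.mulVec e₍₀,₁₎ is a scalar multiple of e₍₀,₁₎, V.mulVec e₍₁,₀₎ is a scalar multiple of e₍₁,₀₎, and V.mulVec e₍₀,₀₎ and V.mulVec e₍₁,₁₎ both lie in the span of e₍₀,₀₎ and e₍₁,₁₎, one has u ≠ V * (c ⊗ d) * CNOT * (a ⊗ b). -/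
import Mathlib

open Matrix Kronecker

noncomputable section

def σy : Matrix (Fin 2) (Fin 2) ℂ := !![0, -Complex.I; Complex.I, 0]

def eps (φ : Fin 2 × Fin 2 → ℂ) : ℂ := φ ⬝ᵥ ((σy ⊗ₖ σy).mulVec φ)

def CNOT : Matrix (Fin 2 × Fin 2) (Fin 2 × Fin 2) ℂ :=
  Matrix.of fun p q => if p.1 = q.1 ∧ p.2 = q.1 + q.2 then 1 else 0

def e (i j : Fin 2) : Fin 2 × Fin 2 → ℂ := Pi.single (i, j) 1

def e₀ : Fin 2 × Fin 2 → ℂ := e 0 0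

def Rz (θ : ℝ) : Matrix (Fin 2) (Fin 2) ℂ :=
  !![Complex.exp (Complex.I * θ / 2), 0; 0, Complex.exp (-Complex.I * θ / 2)]

def Rx (θ : ℝ) : Matrix (Fin 2) (Fin 2) ℂ :=
  !![(Real.cos (θ / 2) : ℂ), Complex.I * Real.sin (θ / 2);
     Complex.I * Real.sin (θ / 2), (Real.cos (θ / 2) : ℂ)]

/- auxiliary development -/

lemma eps_eq (φ : Fin 2 × Fin 2 → ℂ) :
    eps φ = 2 * (φ (0,1) * φ (1,0) - φ (0,0) * φ (1,1)) := by
  simp [eps, σy, dotProduct, mulVec, Fintype.sum_prod_type, Fin.sum_univ_two,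
    Matrix.kroneckerMap_apply]
  ring

lemma eps_kron (A B : Matrix (Fin 2) (Fin 2) ℂ) (φ : Fin 2 × Fin 2 → ℂ) :
    eps ((A ⊗ₖ B).mulVec φ) = A.det * B.det * eps φ := by
  simp only [eps_eq, Matrix.det_fin_two, mulVec, dotProduct,
    Fintype.sum_prod_type, Fin.sum_univ_two, Matrix.kroneckerMap_apply]
  ring

lemma eps_smul (t : ℂ) (φ : Fin 2 × Fin 2 → ℂ) : eps (t • φ) = t^2 * eps φ := by
  simp only [eps_eq, Pi.smul_apply, smul_eq_mul]; ring

lemma eps_cnot_col (C D : Matrix (Fin 2) (Fin 2) ℂ) (i j : Fin 2) :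
    eps (CNOT.mulVec ((C ⊗ₖ D).mulVec (e i j)))
      = 2 * C 0 i * C 1 i * ((D 1 j)^2 - (D 0 j)^2) := by
  have h : ∀ v : Fin 2 × Fin 2 → ℂ, ∀ p : Fin 2 × Fin 2,
      CNOT.mulVec v p = v (p.1, p.1 + p.2) := by
    intro v p
    obtain ⟨pi, pj⟩ := p
    simp only [mulVec, dotProduct, Fintype.sum_prod_type, Fin.sum_univ_two, CNOT, Matrix.of_apply]
    fin_cases pi <;> fin_cases pj <;> simp
  have h2 : ∀ p : Fin 2 × Fin 2, (C ⊗ₖ D).mulVec (e i j) p = C p.1 i * D p.2 j := by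
    intro p
    simp [mulVec, dotProduct, Fintype.sum_prod_type, Fin.sum_univ_two, e, Pi.single_apply,
      Prod.ext_iff]
    fin_cases i <;> fin_cases j <;> simp
  have f1 : ((1:Fin 2)+1) = 0 := rfl
  have f2 : ((0:Fin 2)+1) = 1 := rfl
  have f3 : ((1:Fin 2)+0) = 1 := rfl
  have f4 : ((0:Fin 2)+0) = 0 := rfl
  simp only [eps_eq, h, h2, f1, f2, f3, f4]
  ring

lemma unitary_entries {d : Matrix (Fin 2) (Fin 2) ℂ} (h : d * star d = 1) :
    d 1 1 = d.det * starRingEnd ℂ (d 0 0) ∧ d 0 1 = - d.det * starRingEnd ℂ (d 1 0) := by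
  have h00 := congrFun (congrFun h 0) 0
  have h01 := congrFun (congrFun h 0) 1
  have h10 := congrFun (congrFun h 1) 0
  have h11 := congrFun (congrFun h 1) 1
  simp only [Matrix.mul_apply, Fin.sum_univ_two, Matrix.star_apply, Matrix.one_apply,
    Matrix.conjTranspose_apply, RCLike.star_def, if_true, if_false, ne_eq,
    one_ne_zero, zero_ne_one, reduceIte] at h00 h01 h10 h11
  rw [Matrix.det_fin_two]
  constructor
  · linear_combination (d 0 1) * h10 - (d 1 1) * h00
  · linear_combination (d 1 1) * h01 - (d 0 1) * h11

lemma star_kron (A B : Matrix (Fin 2) (Fin 2) ℂ) :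
    star (A ⊗ₖ B) = star A ⊗ₖ star B := by
  ext p q
  simp [Matrix.star_apply, Matrix.conjTranspose_apply, Matrix.kroneckerMap_apply, _root_.map_mul]

lemma star_CNOT : star CNOT = CNOT := by
  ext ⟨p1, p2⟩ ⟨q1, q2⟩
  fin_cases p1 <;> fin_cases p2 <;> fin_cases q1 <;> fin_cases q2 <;>
    simp [Matrix.star_apply, Matrix.conjTranspose_apply, CNOT]

def kk : ℂ := (1 - Complex.I)/2

def uu : Matrix (Fin 2 × Fin 2) (Fin 2 × Fin 2) ℂ :=
  Matrix.of fun p q =>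
    ![![![![kk, 0], ![0, -kk]], ![![kk, 0], ![0, kk]]],
      ![![![0, 1], ![0, 0]], ![![0, 0], ![1, 0]]]] p.1 p.2 q.1 q.2

lemma hk : (starRingEnd ℂ) kk = (1 + Complex.I)/2 := by
  simp [kk, map_div₀, Complex.conj_ofNat]

set_option maxHeartbeats 1000000 in
lemma uu_unitary : uu ∈ Matrix.unitaryGroup (Fin 2 × Fin 2) ℂ := by
  rw [Matrix.mem_unitaryGroup_iff]
  ext ⟨p1, p2⟩ ⟨q1, q2⟩
  fin_cases p1 <;> fin_cases p2 <;> fin_cases q1 <;> fin_cases q2 <;>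
  · simp only [Matrix.mul_apply, Fintype.sum_prod_type, Fin.sum_univ_two,
      Matrix.star_apply, Matrix.conjTranspose_apply, uu, Matrix.of_apply,
      Matrix.cons_val_zero, Matrix.cons_val_one, Matrix.head_cons, map_zero, _root_.map_one,
      map_neg, hk, kk, Matrix.one_apply, Prod.mk.injEq]
    norm_num
    try ring_nf
    try simp [Complex.I_sq]
    try ring_nf
    try norm_num

lemma star_uu_col (i j : Fin 2) :
    (star uu).mulVec (e i j) = fun p => (starRingEnd ℂ) (uu (i,j) p) := by
  funext p
  simp [mulVec, dotProduct, Fintype.sum_prod_type, Fin.sum_univ_two, e, Pi.single_apply,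
    Matrix.star_apply, Matrix.conjTranspose_apply, Prod.ext_iff]
  fin_cases i <;> fin_cases j <;> simp [mul_comm]

lemma eps_star_uu_01 : eps ((star uu).mulVec (e 0 1)) = -Complex.I := by
  rw [star_uu_col, eps_eq]
  simp [uu, hk]
  try ring_nf
  try simp [Complex.I_sq]
  try ring

lemma eps_star_uu_10 : eps ((star uu).mulVec (e 1 0)) = 0 := by
  rw [star_uu_col, eps_eq]
  simp [uu]

theorem one_cnot_insufficient_2_1_1_measurement :
    ∃ u ∈ Matrix.unitaryGroup (Fin 2 × Fin 2) ℂ,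
      ∀ a ∈ Matrix.unitaryGroup (Fin 2) ℂ, ∀ b ∈ Matrix.unitaryGroup (Fin 2) ℂ,
        ∀ c ∈ Matrix.unitaryGroup (Fin 2) ℂ, ∀ d ∈ Matrix.unitaryGroup (Fin 2) ℂ,
          ∀ V ∈ Matrix.unitaryGroup (Fin 2 × Fin 2) ℂ,
            (∃ α : ℂ, V.mulVec (e 0 1) = α • e 0 1) →
            (∃ β : ℂ, V.mulVec (e 1 0) = β • e 1 0) →
            (∃ γ δ : ℂ, V.mulVec (e 0 0) = γ • e 0 0 + δ • e 1 1) →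
            (∃ γ' δ' : ℂ, V.mulVec (e 1 1) = γ' • e 0 0 + δ' • e 1 1) →
              u ≠ V * (c ⊗ₖ d) * CNOT * (a ⊗ₖ b) := by
  refine ⟨uu, uu_unitary, ?_⟩
  intro a ha b hb c hc d hd V hV h01 h10 _ _ hu
  obtain ⟨α, hα⟩ := h01
  obtain ⟨β, hβ⟩ := h10
  have hVs : star V * V = 1 := Matrix.mem_unitaryGroup_iff'.mp hV
  -- α ≠ 0
  have hαne : α ≠ 0 := by
    intro h0
    have h1 : V.mulVec (e 0 1) = 0 := by rw [hα, h0, zero_smul]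
    have h2 : (star V).mulVec (V.mulVec (e 0 1)) = e 0 1 := by
      rw [Matrix.mulVec_mulVec, hVs, Matrix.one_mulVec]
    rw [h1, Matrix.mulVec_zero] at h2
    have h3 := congrFun h2 (0,1)
    simp [e, Pi.single_apply] at h3
  -- the key identity
  have key : star uu * V = (star a ⊗ₖ star b) * (CNOT * (star c ⊗ₖ star d)) := by
    rw [hu]
    simp only [Matrix.star_mul, star_CNOT, star_kron, Matrix.mul_assoc, hVs, Matrix.mul_one]
  have vec : ∀ i j : Fin 2, ∀ t : ℂ, V.mulVec (e i j) = t • e i j →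
      (star a ⊗ₖ star b).mulVec (CNOT.mulVec ((star c ⊗ₖ star d).mulVec (e i j)))
        = t • ((star uu).mulVec (e i j)) := by
    intro i j t ht
    have h1 : (star uu * V).mulVec (e i j) = t • ((star uu).mulVec (e i j)) := by
      rw [← Matrix.mulVec_mulVec, ht, Matrix.mulVec_smul]
    rw [key, ← Matrix.mulVec_mulVec, ← Matrix.mulVec_mulVec] at h1
    exact h1
  have E1 := congrArg eps (vec 0 1 α hα)
  have E2 := congrArg eps (vec 1 0 β hβ)
  rw [eps_kron, eps_cnot_col, eps_smul, eps_star_uu_01] at E1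
  rw [eps_kron, eps_cnot_col, eps_smul, eps_star_uu_10, mul_zero] at E2
  set C := star c with hCdef
  set D := star d with hDdef
  have hC : C * star C = 1 := by
    rw [hCdef, star_star]; exact Matrix.mem_unitaryGroup_iff'.mp hc
  have hD : D * star D = 1 := by
    rw [hDdef, star_star]; exact Matrix.mem_unitaryGroup_iff'.mp hd
  have hCC := unitary_entries hC
  have hDD := unitary_entries hD
  -- determinants nonzero
  have hdetA : (star a).det ≠ 0 := by
    have h1 : star a * a = 1 := Matrix.mem_unitaryGroup_iff'.mp ha
    have h2 : (star a).det * a.det = 1 := by rw [← Matrix.det_mul, h1, Matrix.det_one]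
    exact left_ne_zero_of_mul_eq_one h2
  have hdetB : (star b).det ≠ 0 := by
    have h1 : star b * b = 1 := Matrix.mem_unitaryGroup_iff'.mp hb
    have h2 : (star b).det * b.det = 1 := by rw [← Matrix.det_mul, h1, Matrix.det_one]
    exact left_ne_zero_of_mul_eq_one h2
  have hdetC : C.det ≠ 0 := by
    have h2 : C.det * (star C).det = 1 := by rw [← Matrix.det_mul, hC, Matrix.det_one]
    exact left_ne_zero_of_mul_eq_one h2
  have hdetD : D.det ≠ 0 := by
    have h2 : D.det * (star D).det = 1 := by rw [← Matrix.det_mul, hD, Matrix.det_one]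
    exact left_ne_zero_of_mul_eq_one h2
  -- from E1, factors are nonzero
  have hL1 : (star a).det * (star b).det *
      (2 * C 0 0 * C 1 0 * ((D 1 1)^2 - (D 0 1)^2)) ≠ 0 := by
    rw [E1]
    exact mul_ne_zero (pow_ne_zero 2 hαne) (neg_ne_zero.mpr Complex.I_ne_zero)
  have h2CX : 2 * C 0 0 * C 1 0 * ((D 1 1)^2 - (D 0 1)^2) ≠ 0 := right_ne_zero_of_mul hL1
  have hX : (D 1 1)^2 - (D 0 1)^2 ≠ 0 := right_ne_zero_of_mul h2CX
  have hC00 : C 0 0 ≠ 0 := right_ne_zero_of_mul (left_ne_zero_of_mul (left_ne_zero_of_mul h2CX))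
  have hC10 : C 1 0 ≠ 0 := right_ne_zero_of_mul (left_ne_zero_of_mul h2CX)
  have hd2 : (D 1 0)^2 - (D 0 0)^2 ≠ 0 := by
    intro hz
    apply hX
    rw [hDD.1, hDD.2]
    have hz' : (starRingEnd ℂ) ((D 1 0)^2 - (D 0 0)^2) = 0 := by rw [hz]; simp
    simp only [map_sub, map_pow] at hz'
    linear_combination (-(D.det^2)) * hz'
  have hq1 : -C.det * (starRingEnd ℂ) (C 1 0) ≠ 0 :=
    mul_ne_zero (neg_ne_zero.mpr hdetC) (star_ne_zero.mpr hC10)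
  have hq2 : C.det * (starRingEnd ℂ) (C 0 0) ≠ 0 :=
    mul_ne_zero hdetC (star_ne_zero.mpr hC00)
  rw [hCC.1, hCC.2] at E2
  exact (mul_ne_zero (mul_ne_zero hdetA hdetB)
    (mul_ne_zero (mul_ne_zero (mul_ne_zero two_ne_zero hq1) hq2) hd2)) E2
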